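/- Let T = Σ_{j=1}^{N} (L_j + L_j*) be the generating operator. Then for every natural number k, the even moments of T in the vacuum state are ⟨T^{2k} δ_e, δ_e⟩ = catalan(k) · N^k, where catalan(k) is the k-th Catalan number. (Consequently, the generating operator T₀ = x₁ + … + x_N of the free group factor L(F_N), where x₁, …, x_N are free standard semicircular generators, has 2k-th moment catalan(k)·N^k.) -/

import Mathlib

noncomputable section

/-- The Hilbert space `ℓ²(FreeMonoid (Fin N), ℂ)`. -/
abbrev FMH (N : ℕ) : Type := lp (fun _ : FreeMonoid (Fin N) => ℂ) 2

/-- The standard orthonormal basis vector `δ_w` at the word `w`. -/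
noncomputable def delta (N : ℕ) (w : FreeMonoid (Fin N)) : FMH N :=
  letI : DecidableEq (FreeMonoid (Fin N)) := Classical.decEq _
  lp.single 2 w 1

/-! `L_j*` deletes a leading letter `j` and kills all other basis vectors, so `T δ_w` is the
sum of the `N` vectors `δ_{j w}` plus, if `w = a w'`, the vector `δ_{w'}`. Hence `⟨δ_w, Tⁿ δ_e⟩`
depends only on `n` and `|w|`: it is the number of walks of length `n` on `ℕ` from `0` to `|w|`,
each down-step weighted by `N`. A walk of length `2i+m` from `0` to `m` has `i` down-steps, and by
the reflection principle there are `C(2i+m, i) - C(2i+m, i+m+1)` of them; for `m = 0` this is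
`catalan i`. -/

def weightedWalks (N : ℕ) : ℕ → ℕ → ℕ
  | 0, 0 => 1
  | 0, _ + 1 => 0
  | n + 1, 0 => N * weightedWalks N n 1
  | n + 1, m + 1 => weightedWalks N n m + N * weightedWalks N n (m + 2)

def ballot (i m : ℕ) : ℤ := (2 * i + m).choose i - (2 * i + m).choose (i + m + 1)

lemma ballot_zero_left (m : ℕ) : ballot 0 m = 1 := by
  simp [ballot]

lemma ballot_succ_zero (i : ℕ) : ballot (i + 1) 0 = ballot i 1 := by
  rw [ballot, ballot, show 2 * (i + 1) + 0 = (2 * i + 1) + 1 by omega,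
    show i + 1 + 0 + 1 = (i + 1) + 1 by omega, Nat.choose_succ_succ' (2 * i + 1) i,
    Nat.choose_succ_succ' (2 * i + 1) (i + 1)]
  push_cast
  ring

lemma ballot_succ_succ (i m : ℕ) :
    ballot (i + 1) (m + 1) = ballot (i + 1) m + ballot i (m + 2) := by
  rw [ballot, ballot, ballot, show 2 * (i + 1) + (m + 1) = (2 * i + m + 2) + 1 by omega,
    show 2 * (i + 1) + m = 2 * i + m + 2 by omega, show 2 * i + (m + 2) = 2 * i + m + 2 by omega,
    show i + 1 + (m + 1) + 1 = (i + m + 2) + 1 by omega, Nat.choose_succ_succ' _ i,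
    Nat.choose_succ_succ' _ (i + m + 2), show i + 1 + m + 1 = i + m + 2 by omega,
    show i + (m + 2) + 1 = i + m + 2 + 1 by omega]
  push_cast
  ring

lemma ballot_zero_right (k : ℕ) : ballot k 0 = catalan k := by
  have hchoose : ((2 * k).choose (k + 1) * (k + 1) : ℤ) = (2 * k).choose k * k := by
    rw [← Nat.cast_succ]
    exact_mod_cast (show 2 * k - k = k by omega) ▸ Nat.choose_succ_right_eq (2 * k) k
  have hcatalan : ((k + 1) * catalan k : ℤ) = (2 * k).choose k := by
    exact_mod_cast succ_mul_catalan_eq_centralBinom k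
  refine mul_left_cancel₀ (show (k + 1 : ℤ) ≠ 0 by positivity) ?_
  rw [ballot, add_zero, add_zero]
  linear_combination -hcatalan - hchoose

lemma weightedWalks_of_lt (N : ℕ) : ∀ {n m : ℕ}, n < m → weightedWalks N n m = 0
  | 0, _ + 1, _ => rfl
  | n + 1, m + 1, h => by
    rw [weightedWalks, weightedWalks_of_lt N (by omega), weightedWalks_of_lt N (by omega),
      mul_zero, add_zero]

lemma weightedWalks_two_mul_add (N i m : ℕ) :
    (weightedWalks N (2 * i + m) m : ℤ) = N ^ i * ballot i m := by
  induction h : 2 * i + m generalizing i m with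
  | zero =>
    obtain ⟨rfl, rfl⟩ : i = 0 ∧ m = 0 := by omega
    simp [weightedWalks, ballot_zero_left]
  | succ n ih =>
    match i, m with
    | 0, 0 => omega
    | i + 1, 0 =>
      rw [weightedWalks, Nat.cast_mul, ih i 1 (by omega), ballot_succ_zero]
      ring
    | i, m + 1 =>
      rw [weightedWalks, Nat.cast_add, Nat.cast_mul, ih i m (by omega)]
      rcases i with _ | i
      · rw [weightedWalks_of_lt N (by omega), ballot_zero_left, ballot_zero_left]; simp
      · rw [ih i (m + 2) (by omega), ballot_succ_succ]; ring

lemma weightedWalks_two_mul_zero (N k : ℕ) : weightedWalks N (2 * k) 0 = catalan k * N ^ k := by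
  have := weightedWalks_two_mul_add N k 0
  rw [add_zero, ballot_zero_right] at this
  exact_mod_cast this.trans (mul_comm _ _)

open ContinuousLinearMap (adjoint adjoint_inner_left adjoint_inner_right star_eq_adjoint)

variable {N : ℕ}

open scoped Classical in
lemma delta_apply (w v : FreeMonoid (Fin N)) : delta N w v = if v = w then 1 else 0 := by
  simp [delta, Pi.single_apply]

lemma inner_delta_left (w : FreeMonoid (Fin N)) (x : FMH N) : inner ℂ (delta N w) x = x w := by
  classical
  simp [delta, lp.inner_single_left]

variable {L : FreeMonoid (Fin N) → (FMH N →L[ℂ] FMH N)}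

lemma adjoint_apply_apply (hL : ∀ w h, L w (delta N h) = delta N (w * h))
    (w : FreeMonoid (Fin N)) (x : FMH N) (h : FreeMonoid (Fin N)) :
    adjoint (L w) x h = x (w * h) := by
  rw [← inner_delta_left, adjoint_inner_right, hL, inner_delta_left]

lemma adjoint_apply_delta_mul (hL : ∀ w h, L w (delta N h) = delta N (w * h))
    (w t : FreeMonoid (Fin N)) : adjoint (L w) (delta N (w * t)) = delta N t := by
  ext h
  classical
  simp only [adjoint_apply_apply hL, delta_apply]
  exact if_congr mul_left_cancel_iff rfl rfl

lemma adjoint_apply_delta_eq_zero (hL : ∀ w h, L w (delta N h) = delta N (w * h))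
    {w v : FreeMonoid (Fin N)} (hv : ∀ t, w * t ≠ v) : adjoint (L w) (delta N v) = 0 := by
  ext h
  simp [adjoint_apply_apply hL, delta_apply, hv h]

def generatingOperator (L : FreeMonoid (Fin N) → (FMH N →L[ℂ] FMH N)) : FMH N →L[ℂ] FMH N :=
  ∑ j, (L (.of j) + adjoint (L (.of j)))

lemma isSelfAdjoint_generatingOperator : IsSelfAdjoint (generatingOperator L) :=
  isSelfAdjoint_sum _ fun j _ => by
    simpa only [add_comm, star_eq_adjoint] using IsSelfAdjoint.star_add_self (L (.of j))

lemma generatingOperator_delta_one (hL : ∀ w h, L w (delta N h) = delta N (w * h)) :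
    generatingOperator L (delta N 1) = ∑ j, delta N (.of j) := by
  have hadj (j : Fin N) : adjoint (L (.of j)) (delta N 1) = 0 :=
    adjoint_apply_delta_eq_zero hL fun t => by simp
  simp only [generatingOperator, sum_apply, add_apply, hL, mul_one, hadj, add_zero]

lemma generatingOperator_delta_of_mul (hL : ∀ w h, L w (delta N h) = delta N (w * h))
    (a : Fin N) (t : FreeMonoid (Fin N)) :
    generatingOperator L (delta N (.of a * t)) =
      ∑ j, delta N (.of j * (.of a * t)) + delta N t := by
  have hadj (j : Fin N) :
      adjoint (L (.of j)) (delta N (.of a * t)) = if j = a then delta N t else 0 := by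
    split_ifs with hja
    · rw [hja, adjoint_apply_delta_mul hL]
    · refine adjoint_apply_delta_eq_zero hL fun s hs => ?_
      obtain ⟨rfl, -⟩ : j = a ∧ s = t := by simpa using congrArg FreeMonoid.toList hs
      exact hja rfl
  simp only [generatingOperator, sum_apply, add_apply, hL, hadj, Finset.sum_add_distrib,
    Finset.sum_ite_eq', Finset.mem_univ, if_true]

lemma inner_delta_generatingOperator_pow (hL : ∀ w h, L w (delta N h) = delta N (w * h))
    (n : ℕ) (w : FreeMonoid (Fin N)) :
    inner ℂ (delta N w) ((generatingOperator L ^ n) (delta N 1)) =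
      weightedWalks N n w.length := by
  have length_of_mul (a : Fin N) (t : FreeMonoid (Fin N)) : (.of a * t).length = t.length + 1 :=
    rfl
  induction n generalizing w with
  | zero =>
    rw [pow_zero, one_apply_eq_self, inner_delta_left, delta_apply]
    cases w using FreeMonoid.casesOn with
    | one => simp [weightedWalks]
    | of_mul a t => simp [length_of_mul, weightedWalks]
  | succ n ih =>
    rw [pow_succ', mul_apply_eq_comp, ← adjoint_inner_left,
      isSelfAdjoint_generatingOperator.adjoint_eq]
    cases w using FreeMonoid.casesOn with
    | one =>
      simp only [generatingOperator_delta_one hL, sum_inner, ih, FreeMonoid.length_of,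
        FreeMonoid.length_one, weightedWalks, Finset.sum_const, Finset.card_univ, Fintype.card_fin,
        nsmul_eq_mul, Nat.cast_mul]
    | of_mul a t =>
      simp only [generatingOperator_delta_of_mul hL, inner_add_left, sum_inner, ih,
        length_of_mul, weightedWalks, Finset.sum_const, Finset.card_univ, Fintype.card_fin,
        nsmul_eq_mul, Nat.cast_mul, Nat.cast_add]
      exact add_comm _ _

theorem generating_operator_even_moments (N : ℕ)
    (L : FreeMonoid (Fin N) → (FMH N →L[ℂ] FMH N))
    (hL : ∀ w h : FreeMonoid (Fin N), L w (delta N h) = delta N (w * h))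
    (k : ℕ) :
    (inner ℂ
        (((∑ j : Fin N, (L (FreeMonoid.of j) + ContinuousLinearMap.adjoint (L (FreeMonoid.of j))))
            ^ (2 * k)) (delta N 1))
        (delta N 1) : ℂ) = (catalan k : ℂ) * (N : ℂ) ^ k := by
  change inner ℂ ((generatingOperator L ^ (2 * k)) (delta N 1)) (delta N 1) = _
  rw [← inner_conj_symm, inner_delta_generatingOperator_pow hL, FreeMonoid.length_one,
    weightedWalks_two_mul_zero]
  simp
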